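/- arXiv:1910.14283 — 7 statements merged into one kernel-verified Lean document; each statement's English description precedes it below -/
import Mathlib

section
/- Consider the second-order system ẋ₁ = x₂, ẋ₂ = f(x₁,x₂,t) + u(t) on [0,∞), a reference transient r(t) with r(0) = x₁(0), ṙ(0) = x₂(0), and the reduced-order extended state observer ξ̇ = −ω_o ξ − ω_o² x₂ − ω_o u with ξ(0) = −ω_o x₂(0) and output f̂ = ξ + ω_o x₂, driven by the control u = −k_ap(x₁ − r) − k_ad(x₂ − ṙ) − f̂ + r̈. Then for all t ≥ 0 the observer output admits the representation f̂(t) = ω_o k_ad (x₁(t) − r(t)) + ω_o (x₂(t) − ṙ(t)) + ω_o k_ap ∫₀ᵗ (x₁(τ) − r(τ)) dτ. -/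
/-!
Substituting the control law into the observer equation cancels the terms in `ξ` and `x₂`, so
`ξ + ω_o ṙ − ω_o k_ad (x₁ − r)` is a primitive of `ω_o k_ap (x₁ − r)`; the initial conditions make
it vanish at `0`, and `f̂ = ξ + ω_o x₂` then rearranges to the representation.
-/

open Real Set intervalIntegral

theorem hasDerivAt_observer_correction {x1 x2 ξ r r' r'' u fhat : ℝ → ℝ} {ωo kap kad s : ℝ}
    (hx1 : HasDerivAt x1 (x2 s) s) (hr : HasDerivAt r (r' s) s) (hr' : HasDerivAt r' (r'' s) s)
    (hu : u s = -kap * (x1 s - r s) - kad * (x2 s - r' s) - fhat s + r'' s)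
    (hξ : HasDerivAt ξ (-ωo * ξ s - ωo ^ 2 * x2 s - ωo * u s) s)
    (hfhat : fhat s = ξ s + ωo * x2 s) :
    HasDerivAt (fun τ => ξ τ + ωo * r' τ - ωo * kad * (x1 τ - r τ))
      (ωo * kap * (x1 s - r s)) s := by
  refine ((hξ.add (hr'.const_mul ωo)).sub ((hx1.sub hr).const_mul (ωo * kad))).congr_deriv ?_
  rw [hu, hfhat]
  ring

/-- **ESO output representation.**
For the second-order system `ẋ₁ = x₂`, `ẋ₂ = f + u`, with reference transient `r`
(`r(0) = x₁(0)`, `ṙ(0) = x₂(0)`), the reduced-order extended state observer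
`ξ̇ = −ω_o ξ − ω_o² x₂ − ω_o u`, `ξ(0) = −ω_o x₂(0)`, `f̂ = ξ + ω_o x₂`,
driven by the ADRC control `u = −k_ap(x₁−r) − k_ad(x₂−ṙ) − f̂ + r̈`, satisfies for all `t ≥ 0`:
`f̂(t) = ω_o k_ad (x₁−r) + ω_o (x₂−ṙ) + ω_o k_ap ∫₀ᵗ (x₁−r)`. -/
theorem eso_output_representation
    (x1 x2 ξ r r' r'' u fhat : ℝ → ℝ) (ωo kap kad : ℝ)
    (hx1 : ∀ t ≥ (0:ℝ), HasDerivAt x1 (x2 t) t)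
    (hr : ∀ t ≥ (0:ℝ), HasDerivAt r (r' t) t)
    (hr' : ∀ t ≥ (0:ℝ), HasDerivAt r' (r'' t) t)
    (hr0 : r 0 = x1 0) (hr'0 : r' 0 = x2 0)
    (hu : ∀ t ≥ (0:ℝ), u t = -kap * (x1 t - r t) - kad * (x2 t - r' t) - fhat t + r'' t)
    (hξ : ∀ t ≥ (0:ℝ), HasDerivAt ξ (-ωo * ξ t - ωo ^ 2 * x2 t - ωo * u t) t)
    (hξ0 : ξ 0 = -ωo * x2 0)
    (hfhat : ∀ t ≥ (0:ℝ), fhat t = ξ t + ωo * x2 t) :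
    ∀ t ≥ (0:ℝ),
      fhat t = ωo * kad * (x1 t - r t) + ωo * (x2 t - r' t)
        + ωo * kap * ∫ τ in (0:ℝ)..t, (x1 τ - r τ) := by
  intro t ht
  have hnonneg : ∀ s ∈ uIcc 0 t, 0 ≤ s := fun s hs => (uIcc_of_le ht ▸ hs).1
  have hprimitive : ∀ s ∈ uIcc 0 t, HasDerivAt
      (fun τ => ξ τ + ωo * r' τ - ωo * kad * (x1 τ - r τ)) (ωo * kap * (x1 s - r s)) s :=
    fun s hs => hasDerivAt_observer_correction (hx1 s (hnonneg s hs)) (hr s (hnonneg s hs))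
      (hr' s (hnonneg s hs)) (hu s (hnonneg s hs)) (hξ s (hnonneg s hs)) (hfhat s (hnonneg s hs))
  have hint : IntervalIntegrable (fun τ => x1 τ - r τ) MeasureTheory.volume 0 t :=
    (HasDerivAt.continuousOn fun s hs =>
      (hx1 s (hnonneg s hs)).sub (hr s (hnonneg s hs))).intervalIntegrable
  have hftc := integral_eq_sub_of_hasDerivAt hprimitive (hint.const_mul (ωo * kap))
  rw [integral_const_mul, hξ0, hr'0, hr0] at hftc
  rw [hfhat t ht, hftc]
  ring
end

section
/- (Frequency-domain comparison of ESO and integral-term estimation errors.) Let k_ap > 0, k_ad > 0, ω_o > 0, and set k_p = k_ap + ω_o k_ad and k_d = k_ad + ω_o. Then for every real frequency ω: (k_ap − ω²)² + k_ad² ω² < (k_p − ω²)² + k_d² ω². Equivalently, the squared ratio |G_{e_f}(iω)|²/|G_{e_{f_I}}(iω)|² = ((k_ap − ω²)² + k_ad²ω²)/((k_p − ω²)² + k_d²ω²) of the transfer-function gains from the total disturbance to the ESO estimation error and to the integral-term estimation error is strictly less than 1 at every frequency. -/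
/-- **Frequency-domain comparison of ESO and integral-term estimation errors (Theorem 3(1)).**
With `k_p = k_ap + ω_o k_ad` and `k_d = k_ad + ω_o`, for every real frequency `ω`:
`(k_ap − ω²)² + k_ad² ω² < (k_p − ω²)² + k_d² ω²`; equivalently the squared gain ratio
`|G_{e_f}(iω)|²/|G_{e_{f_I}}(iω)|² = ((k_ap − ω²)² + k_ad²ω²)/((k_p − ω²)² + k_d²ω²)` is
strictly less than `1` at every frequency. -/
theorem eso_vs_integral_frequency_domain
    (kap kad ωo kp kd : ℝ) (hkap : 0 < kap) (hkad : 0 < kad) (hωo : 0 < ωo)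
    (hkp : kp = kap + ωo * kad) (hkd : kd = kad + ωo) :
    ∀ ω : ℝ,
      (kap - ω ^ 2) ^ 2 + kad ^ 2 * ω ^ 2 < (kp - ω ^ 2) ^ 2 + kd ^ 2 * ω ^ 2 ∧
      ((kap - ω ^ 2) ^ 2 + kad ^ 2 * ω ^ 2) / ((kp - ω ^ 2) ^ 2 + kd ^ 2 * ω ^ 2) < 1 := by
  intro ω
  have h : (kap - ω ^ 2) ^ 2 + kad ^ 2 * ω ^ 2 < (kp - ω ^ 2) ^ 2 + kd ^ 2 * ω ^ 2 := by
    subst hkp hkd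
    nlinarith [sq_nonneg ω, sq_nonneg (ωo * ω), mul_pos hωo hkad, mul_pos (mul_pos hωo hkad) hkap, sq_nonneg (ωo * kad)]
  refine ⟨h, ?_⟩
  have hden : 0 < (kp - ω ^ 2) ^ 2 + kd ^ 2 * ω ^ 2 :=
    lt_of_le_of_lt (by positivity) h
  exact (div_lt_one hden).mpr h
end

section
/- (Positive definiteness of the Lyapunov matrix P.) Let L₂ ≥ 0, and let k_p, k_d, k_i, L₁ satisfy k_p − L₁ > 0, k_d − L₂ > 0, k_i > 0 and (k_p − L₁)(k_d − L₂) − k_i > L₂ √(k_i (k_d − L₂)). Set μ = 2((k_p − L₁)(k_d − L₂) + k_i)/(4(k_p − L₁) + L₂²) and let δ satisfy 0 < δ < 2μk_i/((k_p − L₁) + μ k_d). Then the symmetric 3×3 matrix P = (1/2) [[μ k_i, k_i, δ], [k_i, k_p − L₁ + μ k_d, μ], [δ, μ, 1]] is positive definite. -/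
/-!
Write `c = k_p − L₁ + μ k_d`. Since the `(3,3)` entry of `2P` is `1`, Sylvester's criterion for the
trailing principal minors reduces positive definiteness to `c − μ² > 0` and `det (2P) > 0`, and
`det (2P) = k_i (μ (c − μ²) − k_i) + δ (2 μ k_i − c δ)`. The second term is positive by the choice
of `δ`. For the first, `μ (c − μ²) = μ (k_p − L₁) + μ² L₂ + μ² (k_d − L₂ − μ) ≥ μ (k_p − L₁)`, and
`μ (k_p − L₁) > k_i` is equivalent to `k_i L₂² < 2 (k_p − L₁) ((k_p − L₁)(k_d − L₂) − k_i)`, which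
follows from the square of the gain condition.
-/

open Matrix

noncomputable def lyapunovGain (a b k L : ℝ) : ℝ := 2 * (a * b + k) / (4 * a + L ^ 2)

section LyapunovGain

variable {a b k L : ℝ}

theorem lyapunovGain_pos (ha : 0 < a) (hb : 0 < b) (hk : 0 < k) : 0 < lyapunovGain a b k L := by
  unfold lyapunovGain; positivity

theorem lyapunovGain_lt (ha : 0 < a) (hb : 0 < b) (hk : k < a * b) :
    lyapunovGain a b k L < b := by
  rw [lyapunovGain, div_lt_iff₀ (by positivity)]
  nlinarith [mul_nonneg hb.le (sq_nonneg L)]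

theorem sq_mul_lt_sq_of_mul_sqrt_lt {x y : ℝ} (hL : 0 ≤ L) (hx : 0 ≤ x) (h : L * √x < y) :
    L ^ 2 * x < y ^ 2 := by
  simpa [mul_pow, Real.sq_sqrt hx] using
    pow_lt_pow_left₀ h (mul_nonneg hL (Real.sqrt_nonneg x)) two_ne_zero

theorem lt_lyapunovGain_mul (ha : 0 < a) (hb : 0 < b) (hk : 0 < k) (hL : 0 ≤ L)
    (h : L * √(k * b) < a * b - k) : k < lyapunovGain a b k L * a := by
  have hgap : 0 < a * b - k := (mul_nonneg hL (Real.sqrt_nonneg _)).trans_lt h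
  have hsq := sq_mul_lt_sq_of_mul_sqrt_lt hL (by positivity) h
  -- `b (2a (ab - k) - k L²) > 2ab (ab - k) - (ab - k)² = (ab - k)(ab + k) > 0`
  have hkL : k * L ^ 2 < 2 * a * (a * b - k) := by
    nlinarith [mul_pos hgap (by positivity : 0 < a * b + k)]
  rw [lyapunovGain, div_mul_eq_mul_div, lt_div_iff₀ (by positivity)]
  nlinarith

end LyapunovGain

theorem Matrix.posDef_fin_three_of_trailing_minors {a b c d e f : ℝ} (hf : 0 < f)
    (hcf : 0 < c * f - e ^ 2) (hdet : 0 < !![a, b, d; b, c, e; d, e, f].det) :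
    !![a, b, d; b, c, e; d, e, f].PosDef := by
  refine .of_dotProduct_mulVec_pos ?_ fun x hx => ?_
  · ext i j
    fin_cases i <;> fin_cases j <;> rfl
  set Δ := !![a, b, d; b, c, e; d, e, f].det
  have hΔ : Δ = a * (c * f - e ^ 2) - b * (b * f - d * e) + d * (b * e - c * d) := by
    simp only [Δ, det_fin_three, of_apply, cons_val', cons_val_zero, cons_val_fin_one,
      cons_val_one, cons_val]
    ring
  have hQ : star x ⬝ᵥ (!![a, b, d; b, c, e; d, e, f] *ᵥ x) = a * x 0 ^ 2 + c * x 1 ^ 2 +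
      f * x 2 ^ 2 + 2 * b * x 0 * x 1 + 2 * d * x 0 * x 2 + 2 * e * x 1 * x 2 := by
    simp only [dotProduct, Pi.star_apply, star_trivial, mulVec, of_apply, cons_val',
      cons_val_fin_one, Fin.sum_univ_three, cons_val_zero, cons_val_one, cons_val]
    ring
  set C := c * f - e ^ 2
  -- complete the square in `x 2`, then in `x 1`
  have hsq : C * f * (a * x 0 ^ 2 + c * x 1 ^ 2 + f * x 2 ^ 2 + 2 * b * x 0 * x 1 +
      2 * d * x 0 * x 2 + 2 * e * x 1 * x 2) = C * (d * x 0 + e * x 1 + f * x 2) ^ 2 +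
      ((b * f - d * e) * x 0 + C * x 1) ^ 2 + f * Δ * x 0 ^ 2 := by
    rw [hΔ]; ring
  rw [hQ]
  refine pos_of_mul_pos_right (hsq ▸ ?_) (mul_pos hcf hf).le
  have h₁ := mul_nonneg hcf.le (sq_nonneg (d * x 0 + e * x 1 + f * x 2))
  have h₂ := sq_nonneg ((b * f - d * e) * x 0 + C * x 1)
  obtain h0 | h0 := ne_or_eq (x 0) 0
  · nlinarith [mul_pos (mul_pos hf hdet) (sq_pos_of_ne_zero h0)]
  obtain h1 | h1 := ne_or_eq (x 1) 0
  · simp only [h0]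
    nlinarith [mul_pos (mul_pos hcf hcf) (sq_pos_of_ne_zero h1)]
  have h2 : x 2 ≠ 0 := fun h2 => hx (by ext i; fin_cases i <;> assumption)
  simp only [h0, h1]
  nlinarith [mul_pos hcf (mul_pos (mul_pos hf hf) (sq_pos_of_ne_zero h2))]

theorem posDef_lyapunov_matrix {μ k c δ : ℝ} (hμ : 0 < μ) (hk : 0 < k)
    (hkc : k < μ * (c - μ ^ 2)) (hδ : 0 ≤ δ) (hδc : δ * c < 2 * μ * k) :
    !![μ * k, k, δ; k, c, μ; δ, μ, 1].PosDef := by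
  have hdet : !![μ * k, k, δ; k, c, μ; δ, μ, 1].det =
      k * (μ * (c - μ ^ 2) - k) + δ * (2 * μ * k - δ * c) := by
    simp only [det_fin_three, of_apply, cons_val', cons_val_zero, cons_val_fin_one,
      cons_val_one, cons_val, mul_one]
    ring
  refine posDef_fin_three_of_trailing_minors one_pos ?_ ?_
  · nlinarith
  · rw [hdet]
    nlinarith [mul_nonneg hδ (sub_pos.mpr hδc).le, mul_pos hk (sub_pos.mpr hkc)]

/-- **Positive definiteness of the Lyapunov matrix `P`.**
Under `k_p − L₁ > 0`, `k_d − L₂ > 0`, `k_i > 0`, `L₂ ≥ 0` and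
`(k_p − L₁)(k_d − L₂) − k_i > L₂ √(k_i (k_d − L₂))`, with
`μ = 2((k_p − L₁)(k_d − L₂) + k_i)/(4(k_p − L₁) + L₂²)` and
`0 < δ < 2μk_i/((k_p − L₁) + μ k_d)`, the matrix
`P = (1/2) [[μk_i, k_i, δ], [k_i, k_p − L₁ + μk_d, μ], [δ, μ, 1]]` is positive definite. -/
theorem lyapunov_matrix_P_posdef
    (kp kd ki L1 L2 μ δ : ℝ)
    (hL2 : 0 ≤ L2)
    (h1 : 0 < kp - L1) (h2 : 0 < kd - L2) (h3 : 0 < ki)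
    (h4 : (kp - L1) * (kd - L2) - ki > L2 * Real.sqrt (ki * (kd - L2)))
    (hμ : μ = 2 * ((kp - L1) * (kd - L2) + ki) / (4 * (kp - L1) + L2 ^ 2))
    (hδ1 : 0 < δ) (hδ2 : δ < 2 * μ * ki / ((kp - L1) + μ * kd)) :
    ((1 / 2 : ℝ) • !![μ * ki, ki, δ;
                      ki, kp - L1 + μ * kd, μ;
                      δ, μ, 1]).PosDef := by
  replace hμ : μ = lyapunovGain (kp - L1) (kd - L2) ki L2 := hμ
  have hki_lt : ki < (kp - L1) * (kd - L2) :=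
    sub_pos.mp ((mul_nonneg hL2 (Real.sqrt_nonneg _)).trans_lt h4)
  have hμ_pos : 0 < μ := hμ ▸ lyapunovGain_pos h1 h2 h3
  have hμ_lt : μ < kd - L2 := hμ ▸ lyapunovGain_lt h1 h2 hki_lt
  have hki_lt_μ : ki < μ * (kp - L1) := hμ ▸ lt_lyapunovGain_mul h1 h2 h3 hL2 h4
  have hc : 0 < kp - L1 + μ * kd := by nlinarith
  refine (posDef_lyapunov_matrix hμ_pos h3 ?_ hδ1.le ((lt_div_iff₀ hc).mp hδ2)).smul one_half_pos
  nlinarith [mul_pos (mul_pos hμ_pos hμ_pos) (sub_pos.mpr hμ_lt)]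
end

section
/- Let L₂ ≥ 0 and let k_p, k_d, k_i, L₁ satisfy k_p − L₁ > 0, k_d − L₂ > 0, k_i > 0, (k_p − L₁)(k_d − L₂) − k_i > 0 and [(k_p − L₁)(k_d − L₂) − k_i]² > L₂² k_i (k_d − L₂). Set μ = 2((k_p − L₁)(k_d − L₂) + k_i)/(4(k_p − L₁) + L₂²). Then: (i) μ − k_d + L₂ = (−2(k_p − L₁)(k_d − L₂) + 2k_i − L₂²(k_d − L₂))/(4(k_p − L₁) + L₂²) < 0; (ii) 4(−μ + k_d − L₂)(−k_i + μ(k_p − L₁)) − μ² L₂² = 4([(k_p − L₁)(k_d − L₂) − k_i]² − L₂² k_i (k_d − L₂))/(4(k_p − L₁) + L₂²) > 0; (iii) −k_i + μ(k_p − L₁) > 0. -/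
/-- **Properties of the constant `μ`.**
With `μ = 2((k_p − L₁)(k_d − L₂) + k_i)/(4(k_p − L₁) + L₂²)`, under
`k_p − L₁ > 0`, `k_d − L₂ > 0`, `k_i > 0`, `(k_p − L₁)(k_d − L₂) − k_i > 0` and
`[(k_p − L₁)(k_d − L₂) − k_i]² > L₂² k_i (k_d − L₂)`:
(i) `μ − k_d + L₂ = (−2(k_p − L₁)(k_d − L₂) + 2k_i − L₂²(k_d − L₂))/(4(k_p − L₁) + L₂²) < 0`;
(ii) `4(−μ + k_d − L₂)(−k_i + μ(k_p − L₁)) − μ²L₂²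
      = 4([(k_p − L₁)(k_d − L₂) − k_i]² − L₂² k_i (k_d − L₂))/(4(k_p − L₁) + L₂²) > 0`;
(iii) `−k_i + μ(k_p − L₁) > 0`. -/
theorem mu_inequalities
    (kp kd ki L1 L2 μ : ℝ)
    (hL2 : 0 ≤ L2)
    (h1 : 0 < kp - L1) (h2 : 0 < kd - L2) (h3 : 0 < ki)
    (h4 : 0 < (kp - L1) * (kd - L2) - ki)
    (h5 : ((kp - L1) * (kd - L2) - ki) ^ 2 > L2 ^ 2 * (ki * (kd - L2)))
    (hμ : μ = 2 * ((kp - L1) * (kd - L2) + ki) / (4 * (kp - L1) + L2 ^ 2)) :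
    (μ - kd + L2
        = (-2 * (kp - L1) * (kd - L2) + 2 * ki - L2 ^ 2 * (kd - L2))
            / (4 * (kp - L1) + L2 ^ 2) ∧
      μ - kd + L2 < 0) ∧
    (4 * (-μ + kd - L2) * (-ki + μ * (kp - L1)) - μ ^ 2 * L2 ^ 2
        = 4 * (((kp - L1) * (kd - L2) - ki) ^ 2 - L2 ^ 2 * (ki * (kd - L2)))
            / (4 * (kp - L1) + L2 ^ 2) ∧
      0 < 4 * (-μ + kd - L2) * (-ki + μ * (kp - L1)) - μ ^ 2 * L2 ^ 2) ∧
    0 < -ki + μ * (kp - L1) := by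
  have hD : 0 < 4 * (kp - L1) + L2 ^ 2 := by positivity
  have hD' : (4 * (kp - L1) + L2 ^ 2) ≠ 0 := ne_of_gt hD
  subst hμ
  have e1 : 2 * ((kp - L1) * (kd - L2) + ki) / (4 * (kp - L1) + L2 ^ 2) - kd + L2
      = (-2 * (kp - L1) * (kd - L2) + 2 * ki - L2 ^ 2 * (kd - L2))
          / (4 * (kp - L1) + L2 ^ 2) := by
    field_simp; ring
  have hnum1 : -2 * (kp - L1) * (kd - L2) + 2 * ki - L2 ^ 2 * (kd - L2) < 0 := by
    nlinarith [sq_nonneg L2]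
  have e2 : 4 * (-(2 * ((kp - L1) * (kd - L2) + ki) / (4 * (kp - L1) + L2 ^ 2)) + kd - L2)
        * (-ki + 2 * ((kp - L1) * (kd - L2) + ki) / (4 * (kp - L1) + L2 ^ 2) * (kp - L1))
        - (2 * ((kp - L1) * (kd - L2) + ki) / (4 * (kp - L1) + L2 ^ 2)) ^ 2 * L2 ^ 2
      = 4 * (((kp - L1) * (kd - L2) - ki) ^ 2 - L2 ^ 2 * (ki * (kd - L2)))
          / (4 * (kp - L1) + L2 ^ 2) := by
    field_simp; ring
  have hnum2 : 0 < ((kp - L1) * (kd - L2) - ki) ^ 2 - L2 ^ 2 * (ki * (kd - L2)) := by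
    linarith
  have hiii : 0 < -ki + 2 * ((kp - L1) * (kd - L2) + ki) / (4 * (kp - L1) + L2 ^ 2) * (kp - L1) := by
    rw [div_mul_eq_mul_div, neg_add_eq_sub, lt_sub_iff_add_lt, zero_add, lt_div_iff₀ hD]
    nlinarith [sq_nonneg L2]
  refine ⟨⟨e1, ?_⟩, ⟨e2, ?_⟩, hiii⟩
  · rw [e1]; exact div_neg_of_neg_of_pos hnum1 hD
  · rw [e2]; positivity
end

section
/- (Positive definiteness of the matrix Q.) Let L₂ ≥ 0 and let k_p, k_d, k_i, L₁ satisfy k_p − L₁ > 0, k_d − L₂ > 0, k_i > 0 and [(k_p − L₁)(k_d − L₂) − k_i]² > L₂² k_i (k_d − L₂) with (k_p − L₁)(k_d − L₂) − k_i > 0, and set μ = 2((k_p − L₁)(k_d − L₂) + k_i)/(4(k_p − L₁) + L₂²). Then for all real numbers φ, ψ, a with φ ≥ k_p − L₁, ψ ≥ k_d − L₂ and |a| ≤ L₂, the symmetric 2×2 matrix Q = [[−k_i + μφ, −μa/2], [−μa/2, −μ + ψ]] is positive definite. -/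
/-
The quadratic form of `!![a, b; b, c]` satisfies `a·Q(x, y) = (a x + b y)² + (a c − b²) y²`, so
`0 < a` and `b² < a c` make the matrix positive definite. For `Q` both conditions only get easier as
`φ` and `ψ` grow and `|a|` shrinks, so it suffices to check them at `φ = p := k_p − L₁`,
`ψ = d := k_d − L₂`, `|a| = L₂`. There the choice of `μ`, i.e. `μ (4p + L₂²) = 2 (p d + k_i)`, turns
the determinant condition into exactly `(p d − k_i)² > L₂² k_i d`.
-/

namespace Matrix

theorem posDef_fin_two_of_pos_of_sq_lt {R : Type*} [Field R] [LinearOrder R]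
    [IsStrictOrderedRing R] [StarRing R] [TrivialStar R] {a b c : R} (ha : 0 < a)
    (hb : b ^ 2 < a * c) : (!![a, b; b, c]).PosDef := by
  refine posDef_iff_dotProduct_mulVec.mpr ⟨?_, fun x hx => ?_⟩
  · rw [isHermitian_iff_isSymm]
    ext i j
    fin_cases i <;> fin_cases j <;> rfl
  · have hform : star x ⬝ᵥ (!![a, b; b, c] *ᵥ x)
        = a * x 0 ^ 2 + 2 * b * x 0 * x 1 + c * x 1 ^ 2 := by
      simp [dotProduct, mulVec, Fin.sum_univ_two]
      ring
    have hsq : a * (a * x 0 ^ 2 + 2 * b * x 0 * x 1 + c * x 1 ^ 2)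
        = (a * x 0 + b * x 1) ^ 2 + (a * c - b ^ 2) * x 1 ^ 2 := by ring
    rw [hform]
    refine pos_of_mul_pos_right (hsq ▸ ?_) ha.le
    by_cases hx1 : x 1 = 0
    · have hx0 : x 0 ≠ 0 := fun hx0 => hx (by ext i; fin_cases i <;> simp [hx0, hx1])
      simp only [hx1, mul_zero, add_zero, zero_pow two_ne_zero]
      exact sq_pos_of_ne_zero (mul_ne_zero ha.ne' hx0)
    · have := sub_pos.mpr hb
      positivity

end Matrix

section Gain

variable {p d k L μ : ℝ}

theorem corner_det_mul_eq (hμ : μ * (4 * p + L ^ 2) = 2 * (p * d + k)) :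
    (4 * p + L ^ 2) * (4 * ((μ * p - k) * (d - μ)) - μ ^ 2 * L ^ 2)
      = 4 * ((p * d - k) ^ 2 - L ^ 2 * (k * d)) := by
  linear_combination (2 * (p * d + k) - μ * (4 * p + L ^ 2)) * hμ

theorem corner_det_pos (hp : 0 < p) (hμ : μ * (4 * p + L ^ 2) = 2 * (p * d + k))
    (hgap : L ^ 2 * (k * d) < (p * d - k) ^ 2) :
    μ ^ 2 * L ^ 2 < 4 * ((μ * p - k) * (d - μ)) := by
  have hS : 0 < 4 * p + L ^ 2 := by positivity
  have h := corner_det_mul_eq hμ ▸ mul_pos four_pos (sub_pos.mpr hgap)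
  exact sub_pos.mp (pos_of_mul_pos_right h hS.le)

theorem gain_lt (hp : 0 < p) (hd : 0 < d) (hk : k < p * d)
    (hμ : μ * (4 * p + L ^ 2) = 2 * (p * d + k)) : μ < d := by
  have hS : 0 < 4 * p + L ^ 2 := by positivity
  refine lt_of_mul_lt_mul_right ?_ hS.le
  nlinarith [mul_nonneg hd.le (sq_nonneg L)]

end Gain

theorem matrix_Q_posdef_general
    (kp kd ki L1 L2 μ : ℝ)
    (h1 : 0 < kp - L1) (h2 : 0 < kd - L2) (h3 : 0 < ki)
    (h4 : 0 < (kp - L1) * (kd - L2) - ki)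
    (h5 : ((kp - L1) * (kd - L2) - ki) ^ 2 > L2 ^ 2 * (ki * (kd - L2)))
    (hμ : μ = 2 * ((kp - L1) * (kd - L2) + ki) / (4 * (kp - L1) + L2 ^ 2)) :
    ∀ φ ψ a : ℝ, kp - L1 ≤ φ → kd - L2 ≤ ψ → |a| ≤ L2 →
      (!![-ki + μ * φ, -(μ * a) / 2;
          -(μ * a) / 2, -μ + ψ]).PosDef := by
  intro φ ψ a hφ hψ ha
  have hS : 0 < 4 * (kp - L1) + L2 ^ 2 := by positivity
  have hμS : μ * (4 * (kp - L1) + L2 ^ 2) = 2 * ((kp - L1) * (kd - L2) + ki) := by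
    rw [hμ, div_mul_cancel₀ _ hS.ne']
  have hμ0 : 0 < μ := hμ ▸ div_pos (by linarith [mul_pos h1 h2]) hS
  have hμd : μ < kd - L2 := gain_lt h1 h2 (sub_pos.mp h4) hμS
  have hdet := corner_det_pos h1 hμS h5
  have hkμ : 0 < μ * (kp - L1) - ki :=
    pos_of_mul_pos_left (by linarith [mul_nonneg (sq_nonneg μ) (sq_nonneg L2)])
      (sub_pos.mpr hμd).le
  have hμφ : μ * (kp - L1) ≤ μ * φ := mul_le_mul_of_nonneg_left hφ hμ0.le
  refine Matrix.posDef_fin_two_of_pos_of_sq_lt (by linarith) ?_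
  calc (-(μ * a) / 2) ^ 2 = μ ^ 2 * a ^ 2 / 4 := by ring
    _ ≤ μ ^ 2 * L2 ^ 2 / 4 := by
      gcongr μ ^ 2 * ?_ / 4
      exact sq_le_sq.mpr (ha.trans (le_abs_self L2))
    _ < (μ * (kp - L1) - ki) * (kd - L2 - μ) := by linarith
    _ ≤ (-ki + μ * φ) * (-μ + ψ) :=
      mul_le_mul (by linarith) (by linarith) (sub_pos.mpr hμd).le (by linarith)

/-- **Positive definiteness of the matrix `Q`.**
Under the stated hypotheses on `k_p, k_d, k_i, L₁, L₂` and with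
`μ = 2((k_p − L₁)(k_d − L₂) + k_i)/(4(k_p − L₁) + L₂²)`, for all `φ ≥ k_p − L₁`,
`ψ ≥ k_d − L₂` and `|a| ≤ L₂`, the matrix
`Q = [[−k_i + μφ, −μa/2], [−μa/2, −μ + ψ]]` is positive definite. -/
theorem matrix_Q_posdef
    (kp kd ki L1 L2 μ : ℝ)
    (hL2 : 0 ≤ L2)
    (h1 : 0 < kp - L1) (h2 : 0 < kd - L2) (h3 : 0 < ki)
    (h4 : 0 < (kp - L1) * (kd - L2) - ki)
    (h5 : ((kp - L1) * (kd - L2) - ki) ^ 2 > L2 ^ 2 * (ki * (kd - L2)))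
    (hμ : μ = 2 * ((kp - L1) * (kd - L2) + ki) / (4 * (kp - L1) + L2 ^ 2)) :
    ∀ φ ψ a : ℝ, kp - L1 ≤ φ → kd - L2 ≤ ψ → |a| ≤ L2 →
      (!![-ki + μ * φ, -(μ * a) / 2;
          -(μ * a) / 2, -μ + ψ]).PosDef :=
  matrix_Q_posdef_general kp kd ki L1 L2 μ h1 h2 h3 h4 h5 hμ
end

section
/- (Uniform positive definiteness of W for small δ.) Under the hypotheses guaranteeing Q positive definite (L₂ ≥ 0, k_p − L₁ > 0, k_d − L₂ > 0, k_i > 0, (k_p − L₁)(k_d − L₂) − k_i > 0, [(k_p − L₁)(k_d − L₂) − k_i]² > L₂² k_i (k_d − L₂), μ = 2((k_p − L₁)(k_d − L₂) + k_i)/(4(k_p − L₁) + L₂²)), and given bounds L₁, L₂ so that φ ranges over [k_p − L₁, k_p + L₁], ψ over [k_d − L₂, k_d + L₂] and a over [−L₂, L₂], there exists δ* > 0 such that for every 0 < δ < δ* and every choice of φ, ψ, a in these ranges, the symmetric 3×3 matrix W = [[δ k_i, δφ/2, δψ/2], [δφ/2, −k_i + μφ, −(μa + δ)/2], [δψ/2,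 −(μa + δ)/2, −μ + ψ]] is positive definite. -/
/-! The lower-right block `Q = [[μφ - kᵢ, -μa/2], [-μa/2, ψ - μ]]` is monotone in `φ`, `ψ` and `a²`,
so on the whole parameter box it dominates its value at the corner `φ = k_p - L₁`,
`ψ = k_d - L₂`, `|a| = L₂`, which the gain conditions make positive definite; hence `Q ≥ t • 1`
uniformly for some `t > 0`. The remaining entries of `W` are `O(δ)` with `W₀₀ = δkᵢ`, and
Young's inequality on the first row gives `W ≥ (δkᵢ/2) • 1` once `δ (2φ² + kᵢ + kᵢ²) ≤ 2kᵢt`. -/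

open Filter Topology Matrix

lemma quadForm_nonneg_of_sq_le {A B K : ℝ} (hA : 0 ≤ A) (hB : 0 ≤ B) (hK : K ^ 2 ≤ 4 * A * B)
    (u v : ℝ) : 0 ≤ A * u ^ 2 - K * (u * v) + B * v ^ 2 := by
  rcases hA.eq_or_lt with rfl | hA
  · obtain rfl : K = 0 := by nlinarith [sq_nonneg K]
    nlinarith [sq_nonneg v]
  · nlinarith [sq_nonneg (2 * A * u - K * v), sq_nonneg v]

lemma exists_uniform_quadForm_lower_bound {A₀ B₀ K₀ : ℝ} (hA₀ : 0 < A₀) (hB₀ : 0 < B₀)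
    (hK₀ : K₀ ^ 2 < 4 * A₀ * B₀) :
    ∃ t > 0, ∀ A B K, A₀ ≤ A → B₀ ≤ B → K ^ 2 ≤ K₀ ^ 2 →
      ∀ u v, t * (u ^ 2 + v ^ 2) ≤ A * u ^ 2 - K * (u * v) + B * v ^ 2 := by
  have hdet : Tendsto (fun t : ℝ => 4 * (A₀ - t) * (B₀ - t)) (𝓝 0) (𝓝 (4 * A₀ * B₀)) := by
    simpa using (by fun_prop : Continuous fun t : ℝ => 4 * (A₀ - t) * (B₀ - t)).tendsto 0
  have hnear : ∀ᶠ t in 𝓝 (0 : ℝ), K₀ ^ 2 < 4 * (A₀ - t) * (B₀ - t) ∧ t < A₀ ∧ t < B₀ :=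
    (tendsto_const_nhds.eventually_lt hdet hK₀).and
      ((eventually_lt_nhds hA₀).and (eventually_lt_nhds hB₀))
  obtain ⟨t, ⟨hdet, htA, htB⟩, ht⟩ :=
    ((hnear.filter_mono nhdsWithin_le_nhds).and self_mem_nhdsWithin).exists (f := 𝓝[>] (0 : ℝ))
  refine ⟨t, ht, fun A B K hA hB hK u v => ?_⟩
  have hsemi := quadForm_nonneg_of_sq_le (A := A - t) (B := B - t) (K := K) (by linarith)
    (by linarith) (by nlinarith) u v
  linarith

/-- `Q` at the corner `φ = p`, `ψ = d`, `|a| = L` of the parameter box is positive definite. -/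
lemma worstCase_Q_posDef {p d ki L μ : ℝ} (hp : 0 < p) (hd : 0 < d) (hdet : 0 < p * d - ki)
    (hdisc : (p * d - ki) ^ 2 > L ^ 2 * (ki * d)) (hμ : μ = 2 * (p * d + ki) / (4 * p + L ^ 2)) :
    0 < μ * p - ki ∧ 0 < d - μ ∧ (μ * L) ^ 2 < 4 * (μ * p - ki) * (d - μ) := by
  have hN : 0 < 4 * p + L ^ 2 := by positivity
  have hB : 0 < d - μ := by
    rw [hμ, sub_pos, div_lt_iff₀ hN]
    nlinarith [mul_nonneg hd.le (sq_nonneg L)]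
  -- the choice of `μ` turns `det Q > 0` into the discriminant condition `hdisc`
  have hident : (4 * (μ * p - ki) * (d - μ) - (μ * L) ^ 2) * (4 * p + L ^ 2)
      = 4 * ((p * d - ki) ^ 2 - L ^ 2 * (ki * d)) := by
    rw [hμ]; field_simp; ring
  have hD : (μ * L) ^ 2 < 4 * (μ * p - ki) * (d - μ) := by nlinarith
  refine ⟨?_, hB, hD⟩
  by_contra hA
  nlinarith [sq_nonneg (μ * L)]

lemma quadForm_W_coercive {k t δ φ ψ q e u v : ℝ} (hk : 0 < k) (hδ : 0 ≤ δ)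
    (hφ : δ * (2 * φ ^ 2 + k + k ^ 2) ≤ 2 * k * t) (hψ : δ * (2 * ψ ^ 2 + k + k ^ 2) ≤ 2 * k * t)
    (hq : t * (u ^ 2 + v ^ 2) ≤ q) :
    δ * k / 2 * (e ^ 2 + u ^ 2 + v ^ 2)
      ≤ δ * k * e ^ 2 + δ * φ * (e * u) + δ * ψ * (e * v) - δ * (u * v) + q := by
  -- Young: `k (k e²/4 + φ e u + φ² u² / k) = (k e / 2 + φ u)²`, and likewise for `ψ`
  nlinarith [mul_nonneg hδ (sq_nonneg (k * e + 2 * φ * u)),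
    mul_nonneg hδ (sq_nonneg (k * e + 2 * ψ * v)), mul_nonneg hδ (sq_nonneg (u - v)),
    mul_nonneg (sub_nonneg.2 hφ) (sq_nonneg u), mul_nonneg (sub_nonneg.2 hψ) (sq_nonneg v)]

lemma posDef_of_quadForm_ge {a b c d e f m : ℝ} (hm : 0 < m)
    (h : ∀ x y z : ℝ, m * (x ^ 2 + y ^ 2 + z ^ 2)
      ≤ a * x ^ 2 + 2 * b * (x * y) + 2 * c * (x * z) + d * y ^ 2 + 2 * e * (y * z) + f * z ^ 2) :
    (!![a, b, c; b, d, e; c, e, f]).PosDef := by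
  refine posDef_iff_dotProduct_mulVec.2 ⟨?_, fun x hx => ?_⟩
  · ext i j
    fin_cases i <;> fin_cases j <;> rfl
  · have hpos := dotProduct_star_self_pos_iff.2 hx
    simp only [dotProduct, mulVec, Fin.sum_univ_three, star_trivial, Pi.star_apply, of_apply,
      cons_val_zero, cons_val_one, cons_val, cons_val_fin_one, cons_val'] at hpos ⊢
    nlinarith [h (x 0) (x 1) (x 2)]

theorem matrix_W_posdef_for_small_delta_general
    (kp kd ki L1 L2 μ : ℝ)
    (h1 : 0 < kp - L1) (h2 : 0 < kd - L2) (h3 : 0 < ki)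
    (h4 : 0 < (kp - L1) * (kd - L2) - ki)
    (h5 : ((kp - L1) * (kd - L2) - ki) ^ 2 > L2 ^ 2 * (ki * (kd - L2)))
    (hμ : μ = 2 * ((kp - L1) * (kd - L2) + ki) / (4 * (kp - L1) + L2 ^ 2)) :
    ∃ δstar > (0:ℝ), ∀ δ : ℝ, 0 < δ → δ < δstar →
      ∀ φ ψ a : ℝ,
        kp - L1 ≤ φ → φ ≤ kp + L1 →
        kd - L2 ≤ ψ → ψ ≤ kd + L2 →
        -L2 ≤ a → a ≤ L2 →
        (!![δ * ki, δ * φ / 2, δ * ψ / 2;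
            δ * φ / 2, -ki + μ * φ, -(μ * a + δ) / 2;
            δ * ψ / 2, -(μ * a + δ) / 2, -μ + ψ]).PosDef := by
  obtain ⟨hA₀, hB₀, hK₀⟩ := worstCase_Q_posDef h1 h2 h4 h5 hμ
  have hμ₀ : 0 < μ := by nlinarith
  obtain ⟨t, ht, hQ⟩ := exists_uniform_quadForm_lower_bound hA₀ hB₀ hK₀
  set M := 2 * ((kp + L1) ^ 2 + (kd + L2) ^ 2) + ki + ki ^ 2
  refine ⟨2 * ki * t / M, by positivity, fun δ hδ hδM φ ψ a hφ₁ hφ₂ hψ₁ hψ₂ ha₁ ha₂ => ?_⟩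
  rw [lt_div_iff₀ (by positivity)] at hδM
  have hφ : δ * (2 * φ ^ 2 + ki + ki ^ 2) ≤ 2 * ki * t := by
    nlinarith [sq_le_sq' (by linarith : -(kp + L1) ≤ φ) hφ₂, sq_nonneg (kd + L2)]
  have hψ : δ * (2 * ψ ^ 2 + ki + ki ^ 2) ≤ 2 * ki * t := by
    nlinarith [sq_le_sq' (by linarith : -(kd + L2) ≤ ψ) hψ₂, sq_nonneg (kp + L1)]
  have hq := hQ (μ * φ - ki) (ψ - μ) (μ * a) (by nlinarith) (by linarith)
    (sq_le_sq' (by nlinarith) (by nlinarith))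
  refine posDef_of_quadForm_ge (m := δ * ki / 2) (by positivity) fun e u v => ?_
  linarith [quadForm_W_coercive (e := e) h3 hδ.le hφ hψ (hq u v)]

/-- **Uniform positive definiteness of `W` for small `δ`.**
Under the hypotheses guaranteeing positive definiteness of `Q`, there exists `δ* > 0` such
that for every `0 < δ < δ*` and every `φ ∈ [k_p − L₁, k_p + L₁]`, `ψ ∈ [k_d − L₂, k_d + L₂]`,
`a ∈ [−L₂, L₂]`, the matrix
`W = [[δk_i, δφ/2, δψ/2], [δφ/2, −k_i + μφ, −(μa + δ)/2], [δψ/2, −(μa + δ)/2, −μ + ψ]]`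
is positive definite. -/
theorem matrix_W_posdef_for_small_delta
    (kp kd ki L1 L2 μ : ℝ)
    (hL2 : 0 ≤ L2)
    (h1 : 0 < kp - L1) (h2 : 0 < kd - L2) (h3 : 0 < ki)
    (h4 : 0 < (kp - L1) * (kd - L2) - ki)
    (h5 : ((kp - L1) * (kd - L2) - ki) ^ 2 > L2 ^ 2 * (ki * (kd - L2)))
    (hμ : μ = 2 * ((kp - L1) * (kd - L2) + ki) / (4 * (kp - L1) + L2 ^ 2)) :
    ∃ δstar > (0:ℝ), ∀ δ : ℝ, 0 < δ → δ < δstar →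
      ∀ φ ψ a : ℝ,
        kp - L1 ≤ φ → φ ≤ kp + L1 →
        kd - L2 ≤ ψ → ψ ≤ kd + L2 →
        -L2 ≤ a → a ≤ L2 →
        (!![δ * ki, δ * φ / 2, δ * ψ / 2;
            δ * φ / 2, -ki + μ * φ, -(μ * a + δ) / 2;
            δ * ψ / 2, -(μ * a + δ) / 2, -μ + ψ]).PosDef :=
  matrix_W_posdef_for_small_delta_general kp kd ki L1 L2 μ h1 h2 h3 h4 h5 hμ
end

section
/- (Uniform state bound from a bounded forcing term.) Let k_ap > 0, k_ad > 0, and let e, e_d : [0,∞) → ℝ be differentiable with ė = e_d, ė_d = −k_ap e − k_ad e_d + e_f(t), e(0) = 0, e_d(0) = 0, where e_f is continuous and sup_{t≥0} |e_f(t)| < ∞. Then for all t ≥ 0: ‖(e(t), e_d(t))‖ ≤ γ₄ · sup_{s≥0} |e_f(s)|, where γ₄ = max{1/k_ap, (1 + k_ap)/(k_ad k_ap)} · λ_max(P₂)/λ_min(P₂) and P₂ = [[(1 + k_ap)/(2k_ad) + k_ad/(2k_ap), 1/(2k_ap)], [1/(2k_ap), (1 + k_ap)/(2k_ad k_ap)]].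 -/
/-!
`P₂` solves the Lyapunov equation `A₀ᵀ P₂ + P₂ A₀ = -1` for the closed-loop matrix
`A₀ = [[0, 1], [-k_ap, -k_ad]]`. Hence along `x = (e, e_d)` the function `V = xᵀ P₂ x`
satisfies `V' = -‖x‖² + 2 e_f ⟪P₂ b, x⟫` with `b = (0, 1)`, so `V` cannot increase while
`‖x‖ ≥ 2 ‖P₂ b‖ S`, and the sublevel set `{V ≤ λ_max (2 ‖P₂ b‖ S)²}`, which contains
`x(0) = 0`, is forward invariant. Comparing `V` with `λ_min ‖x‖²`, and using
`‖P₂ b‖² ≤ λ_max bᵀP₂b` and `λ_min ≤ bᵀP₂b`, gives `‖x‖ ≤ 2 bᵀP₂b · (λ_max / λ_min) · S`,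
where `2 bᵀP₂b = (1 + k_ap) / (k_ad k_ap)`.
-/

open Matrix

theorem Finset.inf'_le_sup' {α β : Type*} [Lattice β] (s : Finset α) (hs : s.Nonempty)
    (f : α → β) : s.inf' hs f ≤ s.sup' hs f :=
  (s.inf'_le f hs.choose_spec).trans (s.le_sup' f hs.choose_spec)

namespace Matrix

variable {n : Type*} [Fintype n]

section LinearOrderedCommRing

variable {R : Type*} [CommRing R] [LinearOrder R] [IsStrictOrderedRing R]

theorem dotProduct_self_nonneg (x : n → R) : 0 ≤ x ⬝ᵥ x :=
  Fintype.sum_nonneg fun _ => mul_self_nonneg _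

theorem dotProduct_sq_le_dotProduct_self_mul (c x : n → R) :
    (c ⬝ᵥ x) ^ 2 ≤ (c ⬝ᵥ c) * (x ⬝ᵥ x) := by
  simpa only [dotProduct, sq] using Finset.sum_mul_sq_le_sq_mul_sq Finset.univ c x

end LinearOrderedCommRing

theorem dotProduct_star_mulVec_star_mulVec [DecidableEq n] (U : unitaryGroup n ℝ)
    (x y : n → ℝ) :
    (star (U : Matrix n n ℝ) *ᵥ x) ⬝ᵥ (star (U : Matrix n n ℝ) *ᵥ y) = x ⬝ᵥ y := by
  have hU : (U : Matrix n n ℝ) * (U : Matrix n n ℝ)ᵀ = 1 := by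
    simpa [star_eq_conjTranspose] using Unitary.coe_mul_star_self U
  rw [dotProduct_mulVec, star_eq_conjTranspose, conjTranspose_eq_transpose_of_trivial,
    ← vecMul_transpose, vecMul_vecMul, transpose_transpose, hU, vecMul_one]

namespace IsHermitian

variable [DecidableEq n] {A : Matrix n n ℝ} (hA : A.IsHermitian)

local notation "Λ" => hA.eigenvalues
local notation "U" => (hA.eigenvectorUnitary : Matrix n n ℝ)

theorem star_eigenvectorUnitary_mulVec_mulVec (x : n → ℝ) (i : n) :
    (star U *ᵥ (A *ᵥ x)) i = Λ i * (star U *ᵥ x) i := by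
  have h : star U * A = diagonal Λ * star U := by
    have := hA.conjStarAlgAut_star_eigenvectorUnitary
    rw [Unitary.conjStarAlgAut_star_apply] at this
    rw [← Matrix.mul_one (star U * A), ← Unitary.coe_mul_star_self hA.eigenvectorUnitary,
      ← Matrix.mul_assoc, this]
    rfl
  rw [mulVec_mulVec, h, ← mulVec_mulVec, mulVec_diagonal]

theorem dotProduct_self_eq_sum (x : n → ℝ) : x ⬝ᵥ x = ∑ i, (star U *ᵥ x) i ^ 2 := by
  rw [← dotProduct_star_mulVec_star_mulVec hA.eigenvectorUnitary x x]
  simp only [dotProduct, sq]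

theorem dotProduct_mulVec_eq_sum (x : n → ℝ) :
    x ⬝ᵥ A *ᵥ x = ∑ i, Λ i * (star U *ᵥ x) i ^ 2 := by
  rw [← dotProduct_star_mulVec_star_mulVec hA.eigenvectorUnitary]
  simp only [dotProduct, star_eigenvectorUnitary_mulVec_mulVec]
  exact Finset.sum_congr rfl fun i _ => by ring

theorem mulVec_dotProduct_mulVec_eq_sum (x : n → ℝ) :
    (A *ᵥ x) ⬝ᵥ (A *ᵥ x) = ∑ i, Λ i ^ 2 * (star U *ᵥ x) i ^ 2 := by
  rw [← dotProduct_star_mulVec_star_mulVec hA.eigenvectorUnitary]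
  simp only [dotProduct, star_eigenvectorUnitary_mulVec_mulVec]
  exact Finset.sum_congr rfl fun i _ => by ring

variable [Nonempty n]

theorem inf'_eigenvalues_mul_le (x : n → ℝ) :
    Finset.univ.inf' Finset.univ_nonempty Λ * (x ⬝ᵥ x) ≤ x ⬝ᵥ A *ᵥ x := by
  rw [dotProduct_self_eq_sum hA, dotProduct_mulVec_eq_sum hA, Finset.mul_sum]
  exact Finset.sum_le_sum fun i hi =>
    mul_le_mul_of_nonneg_right (Finset.inf'_le _ hi) (sq_nonneg _)

theorem le_sup'_eigenvalues_mul (x : n → ℝ) :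
    x ⬝ᵥ A *ᵥ x ≤ Finset.univ.sup' Finset.univ_nonempty Λ * (x ⬝ᵥ x) := by
  rw [dotProduct_self_eq_sum hA, dotProduct_mulVec_eq_sum hA, Finset.mul_sum]
  exact Finset.sum_le_sum fun i hi =>
    mul_le_mul_of_nonneg_right (Finset.le_sup' _ hi) (sq_nonneg _)

end IsHermitian

theorem PosDef.inf'_eigenvalues_pos [DecidableEq n] [Nonempty n] {A : Matrix n n ℝ}
    (hA : A.PosDef) : 0 < Finset.univ.inf' Finset.univ_nonempty hA.1.eigenvalues :=
  (Finset.lt_inf'_iff _).2 fun i _ => hA.eigenvalues_pos i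

theorem PosSemidef.mulVec_dotProduct_mulVec_le [DecidableEq n] [Nonempty n] {A : Matrix n n ℝ}
    (hA : A.PosSemidef) (x : n → ℝ) :
    (A *ᵥ x) ⬝ᵥ (A *ᵥ x)
      ≤ Finset.univ.sup' Finset.univ_nonempty hA.1.eigenvalues * (x ⬝ᵥ A *ᵥ x) := by
  rw [hA.1.mulVec_dotProduct_mulVec_eq_sum, hA.1.dotProduct_mulVec_eq_sum, Finset.mul_sum]
  refine Finset.sum_le_sum fun i hi => ?_
  rw [← mul_assoc, sq]
  exact mul_le_mul_of_nonneg_right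
    (mul_le_mul_of_nonneg_right (Finset.le_sup' _ hi) (hA.eigenvalues_nonneg i)) (sq_nonneg _)

end Matrix

section Calculus

variable {n : Type*} [Fintype n]

theorem HasDerivAt.dotProduct {f g : ℝ → n → ℝ} {f' g' : n → ℝ} {t : ℝ}
    (hf : HasDerivAt f f' t) (hg : HasDerivAt g g' t) :
    HasDerivAt (fun s => f s ⬝ᵥ g s) (f' ⬝ᵥ g t + f t ⬝ᵥ g') t := by
  have h := HasDerivAt.fun_sum (u := Finset.univ) fun i _ =>
    (hasDerivAt_pi.1 hf i).fun_mul (hasDerivAt_pi.1 hg i)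
  rw [Finset.sum_add_distrib] at h
  exact h

theorem HasDerivAt.mulVec (P : Matrix n n ℝ) {f : ℝ → n → ℝ} {f' : n → ℝ} {t : ℝ}
    (hf : HasDerivAt f f' t) : HasDerivAt (fun s => P *ᵥ f s) (P *ᵥ f') t :=
  hasDerivAt_pi.2 fun i => by
    have h := (hasDerivAt_const t (P i)).dotProduct hf
    rw [zero_dotProduct, zero_add] at h
    exact h

theorem HasDerivAt.dotProduct_mulVec_of_lyapunov [DecidableEq n] {A P : Matrix n n ℝ}
    (hP : P.IsSymm) (hAP : Aᵀ * P + P * A = -1) {x : ℝ → n → ℝ} {b : n → ℝ} {u t : ℝ}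
    (hx : HasDerivAt x (A *ᵥ x t + u • b) t) :
    HasDerivAt (fun s => x s ⬝ᵥ P *ᵥ x s) (-(x t ⬝ᵥ x t) + 2 * u * ((P *ᵥ b) ⬝ᵥ x t)) t := by
  convert hx.dotProduct (hx.mulVec P) using 1
  have hsym : ∀ v w : n → ℝ, v ⬝ᵥ P *ᵥ w = (P *ᵥ v) ⬝ᵥ w := fun v w => by
    rw [dotProduct_mulVec, ← mulVec_transpose, hP.eq]
  have hlyap : (A *ᵥ x t) ⬝ᵥ P *ᵥ x t + x t ⬝ᵥ P *ᵥ (A *ᵥ x t) = -(x t ⬝ᵥ x t) := by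
    calc (A *ᵥ x t) ⬝ᵥ P *ᵥ x t + x t ⬝ᵥ P *ᵥ (A *ᵥ x t)
        = x t ⬝ᵥ (Aᵀ * P + P * A) *ᵥ x t := by
          rw [dotProduct_comm, ← dotProduct_transpose_mulVec, add_mulVec, dotProduct_add,
            mulVec_mulVec, mulVec_mulVec]
      _ = -(x t ⬝ᵥ x t) := by rw [hAP, neg_mulVec, one_mulVec, dotProduct_neg]
  simp only [mulVec_add, mulVec_smul, add_dotProduct, dotProduct_add, smul_dotProduct,
    dotProduct_smul, smul_eq_mul, hsym b, ← hlyap]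
  rw [dotProduct_comm (P *ᵥ b)]
  ring

end Calculus

theorem le_of_hasDerivAt_nonpos_of_ge {V V' : ℝ → ℝ} {a C t : ℝ}
    (hV : ∀ s ≥ a, HasDerivAt V (V' s) s) (ha : V a ≤ C)
    (hV' : ∀ s ≥ a, C ≤ V s → V' s ≤ 0) (ht : a ≤ t) : V t ≤ C := by
  refine le_of_forall_pos_le_add fun ε hε => ?_
  -- the fence `C + δ (s - a)` has slope `δ > 0`, which makes the sign condition on `V'` strict
  set δ := ε / (t - a + 1)
  have hδ : 0 < δ := div_pos hε (by linarith)
  have hfence := image_le_of_deriv_right_lt_deriv_boundary' (a := a) (b := t)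
    (B := fun s => C + δ * (s - a)) (B' := fun _ => δ)
    (fun s hs => (hV s hs.1).continuousAt.continuousWithinAt)
    (fun s hs => (hV s hs.1).hasDerivWithinAt) (by simpa using ha) (by fun_prop)
    (fun s _ => by
      simpa using (((hasDerivAt_id s).sub_const a).const_mul δ).const_add C |>.hasDerivWithinAt)
    (fun s hs hVs => (hV' s hs.1 (by nlinarith [hs.1])).trans_lt hδ) ⟨ht, le_rfl⟩
  have : δ * (t - a) ≤ ε := by
    rw [div_mul_eq_mul_div, div_le_iff₀ (by linarith)]
    nlinarith
  linarith

theorem neg_dotProduct_self_add_le_zero {n : Type*} [Fintype n] {c x : n → ℝ} {u S : ℝ}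
    (hu : |u| ≤ S) (hx : 4 * (c ⬝ᵥ c) * S ^ 2 ≤ x ⬝ᵥ x) :
    -(x ⬝ᵥ x) + 2 * u * (c ⬝ᵥ x) ≤ 0 := by
  have hu2 : u ^ 2 ≤ S ^ 2 := sq_le_sq' (abs_le.1 hu).1 (abs_le.1 hu).2
  have hcs := dotProduct_sq_le_dotProduct_self_mul c x
  have hsq : (2 * u * (c ⬝ᵥ x)) ^ 2 ≤ (x ⬝ᵥ x) ^ 2 :=
    calc (2 * u * (c ⬝ᵥ x)) ^ 2 = 4 * u ^ 2 * (c ⬝ᵥ x) ^ 2 := by ring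
      _ ≤ 4 * S ^ 2 * ((c ⬝ᵥ c) * (x ⬝ᵥ x)) := by gcongr
      _ = 4 * (c ⬝ᵥ c) * S ^ 2 * (x ⬝ᵥ x) := by ring
      _ ≤ (x ⬝ᵥ x) * (x ⬝ᵥ x) := mul_le_mul_of_nonneg_right hx (dotProduct_self_nonneg x)
      _ = (x ⬝ᵥ x) ^ 2 := (sq _).symm
  linarith [(abs_le_of_sq_le_sq' hsq (dotProduct_self_nonneg x)).2]

theorem sqrt_dotProduct_self_le_of_lyapunov {n : Type*} [Fintype n] [DecidableEq n]
    [Nonempty n] {A P : Matrix n n ℝ} (hP : P.PosDef) (hAP : Aᵀ * P + P * A = -1) {b : n → ℝ}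
    (hb : b ⬝ᵥ b = 1) {x : ℝ → n → ℝ} {u : ℝ → ℝ} {S : ℝ}
    (hx : ∀ s ≥ 0, HasDerivAt x (A *ᵥ x s + u s • b) s) (hu : ∀ s ≥ 0, |u s| ≤ S)
    (hx0 : x 0 = 0) {t : ℝ} (ht : 0 ≤ t) :
    √(x t ⬝ᵥ x t) ≤ 2 * (b ⬝ᵥ P *ᵥ b) *
      (Finset.univ.sup' Finset.univ_nonempty hP.1.eigenvalues
        / Finset.univ.inf' Finset.univ_nonempty hP.1.eigenvalues) * S := by
  set lo := Finset.univ.inf' Finset.univ_nonempty hP.1.eigenvalues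
  set hi := Finset.univ.sup' Finset.univ_nonempty hP.1.eigenvalues
  set β := b ⬝ᵥ P *ᵥ b
  set c := P *ᵥ b
  have hlo : 0 < lo := hP.inf'_eigenvalues_pos
  have hhi : 0 < hi := hlo.trans_le (Finset.inf'_le_sup' _ _ _)
  have hS : 0 ≤ S := (abs_nonneg _).trans (hu 0 le_rfl)
  have hloβ : lo ≤ β := by simpa only [hb, mul_one] using hP.1.inf'_eigenvalues_mul_le b
  have hcβ : c ⬝ᵥ c ≤ hi * β := hP.posSemidef.mulVec_dotProduct_mulVec_le b
  have hR : 0 ≤ 4 * (c ⬝ᵥ c) * S ^ 2 := by have := dotProduct_self_nonneg c; positivity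
  have hV : x t ⬝ᵥ P *ᵥ x t ≤ hi * (4 * (c ⬝ᵥ c) * S ^ 2) := by
    refine le_of_hasDerivAt_nonpos_of_ge
      (fun s hs => (hx s hs).dotProduct_mulVec_of_lyapunov (isHermitian_iff_isSymm.1 hP.1) hAP)
      (by simpa [hx0] using mul_nonneg hhi.le hR) (fun s hs hVs => ?_) ht
    exact neg_dotProduct_self_add_le_zero (hu s hs)
      (le_of_mul_le_mul_left (hVs.trans (hP.1.le_sup'_eigenvalues_mul (x s))) hhi)
  have hρ : lo * (x t ⬝ᵥ x t) ≤ 4 * hi ^ 2 * β * S ^ 2 :=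
    calc lo * (x t ⬝ᵥ x t) ≤ hi * (4 * (c ⬝ᵥ c) * S ^ 2) :=
          (hP.1.inf'_eigenvalues_mul_le _).trans hV
      _ ≤ hi * (4 * (hi * β) * S ^ 2) := by gcongr
      _ = 4 * hi ^ 2 * β * S ^ 2 := by ring
  rw [Real.sqrt_le_iff]
  refine ⟨by have := hlo.le.trans hloβ; positivity, ?_⟩
  rw [mul_pow, mul_pow, div_pow, mul_pow, ← mul_div_assoc, div_mul_eq_mul_div,
    le_div_iff₀ (by positivity)]
  calc x t ⬝ᵥ x t * lo ^ 2 = lo * (lo * (x t ⬝ᵥ x t)) := by ring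
    _ ≤ β * (4 * hi ^ 2 * β * S ^ 2) := by
      gcongr
      · exact mul_nonneg hlo.le (dotProduct_self_nonneg _)
      · exact hlo.le.trans hloβ
    _ = 2 ^ 2 * β ^ 2 * hi ^ 2 * S ^ 2 := by ring

def closedLoopMatrix (kap kad : ℝ) : Matrix (Fin 2) (Fin 2) ℝ := !![0, 1; -kap, -kad]

noncomputable def lyapunovSolution (kap kad : ℝ) : Matrix (Fin 2) (Fin 2) ℝ :=
  !![(1 + kap) / (2 * kad) + kad / (2 * kap), 1 / (2 * kap);
     1 / (2 * kap), (1 + kap) / (2 * kad * kap)]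

theorem transpose_closedLoopMatrix_mul_add_mul {kap kad : ℝ} (hkap : kap ≠ 0)
    (hkad : kad ≠ 0) :
    (closedLoopMatrix kap kad)ᵀ * lyapunovSolution kap kad
      + lyapunovSolution kap kad * closedLoopMatrix kap kad = -1 := by
  ext i j
  fin_cases i <;> fin_cases j <;>
    simp [closedLoopMatrix, lyapunovSolution, Matrix.mul_apply, Fin.sum_univ_two] <;>
    field_simp <;> ring

theorem lyapunovSolution_posDef {kap kad : ℝ} (hkap : 0 < kap) (hkad : 0 < kad) :
    (lyapunovSolution kap kad).PosDef := by
  refine .of_dotProduct_mulVec_pos ?_ fun v hv => ?_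
  · ext i j
    fin_cases i <;> fin_cases j <;> simp [lyapunovSolution]
  have hv' : v 0 ≠ 0 ∨ v 1 ≠ 0 := by
    by_contra! h
    exact hv (by ext i; fin_cases i <;> simp [h])
  have hform : star v ⬝ᵥ lyapunovSolution kap kad *ᵥ v
      = (kap * (1 + kap) * v 0 ^ 2 + (kad * v 0 + v 1) ^ 2 + kap * v 1 ^ 2)
          / (2 * kad * kap) := by
    simp [lyapunovSolution, dotProduct, mulVec, Fin.sum_univ_two]
    field_simp
    ring
  rw [hform]
  refine div_pos ?_ (by positivity)
  rcases hv' with h | h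
  · positivity
  · positivity

theorem HasDerivAt.vecCons_closedLoopMatrix {kap kad : ℝ} {e ed : ℝ → ℝ} {u s : ℝ}
    (he : HasDerivAt e (ed s) s) (hed : HasDerivAt ed (-kap * e s - kad * ed s + u) s) :
    HasDerivAt (fun s => ![e s, ed s])
      (closedLoopMatrix kap kad *ᵥ ![e s, ed s] + u • ![0, 1]) s :=
  hasDerivAt_pi.2 fun i => by
    fin_cases i
    · simpa [closedLoopMatrix] using he
    · have hderiv : -kap * e s - kad * ed s + u
          = (closedLoopMatrix kap kad *ᵥ ![e s, ed s] + u • ![0, 1] : Fin 2 → ℝ) 1 := by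
        simp [closedLoopMatrix]
        ring
      exact hderiv ▸ hed

theorem two_mul_dotProduct_lyapunovSolution_mulVec {kap kad : ℝ} (hkap : kap ≠ 0)
    (hkad : kad ≠ 0) :
    2 * (![0, 1] ⬝ᵥ lyapunovSolution kap kad *ᵥ ![0, 1]) = (1 + kap) / (kad * kap) := by
  simp [lyapunovSolution, mulVec, dotProduct, Fin.sum_univ_two]
  field_simp

theorem uniform_state_bound_general
    (kap kad : ℝ) (hkap : 0 < kap) (hkad : 0 < kad)
    (P2 : Matrix (Fin 2) (Fin 2) ℝ)
    (hP2 : P2 = !![(1 + kap) / (2 * kad) + kad / (2 * kap), 1 / (2 * kap);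
                   1 / (2 * kap), (1 + kap) / (2 * kad * kap)])
    (hP2herm : P2.IsHermitian)
    (e ed ef : ℝ → ℝ) (S : ℝ)
    (hS : IsLUB {y : ℝ | ∃ t ≥ (0:ℝ), y = |ef t|} S)
    (he : ∀ t ≥ (0:ℝ), HasDerivAt e (ed t) t)
    (hed : ∀ t ≥ (0:ℝ), HasDerivAt ed (-kap * e t - kad * ed t + ef t) t)
    (he0 : e 0 = 0) (hed0 : ed 0 = 0) :
    ∀ t ≥ (0:ℝ),
      Real.sqrt ((e t) ^ 2 + (ed t) ^ 2)
        ≤ (max (1 / kap) ((1 + kap) / (kad * kap))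
            * (Finset.univ.sup' Finset.univ_nonempty hP2herm.eigenvalues)
            / (Finset.univ.inf' Finset.univ_nonempty hP2herm.eigenvalues)) * S := by
  intro t ht
  obtain rfl : P2 = lyapunovSolution kap kad := hP2
  have hpos := lyapunovSolution_posDef hkap hkad
  have hef_le : ∀ s ≥ 0, |ef s| ≤ S := fun s hs => hS.1 ⟨s, hs, rfl⟩
  have hbound := sqrt_dotProduct_self_le_of_lyapunov hpos
    (transpose_closedLoopMatrix_mul_add_mul hkap.ne' hkad.ne') (by simp)
    (fun s hs => (he s hs).vecCons_closedLoopMatrix (hed s hs)) hef_le (by simp [he0, hed0]) ht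
  have hβ : 2 * (![0, 1] ⬝ᵥ lyapunovSolution kap kad *ᵥ ![0, 1]) ≤
      max (1 / kap) ((1 + kap) / (kad * kap)) :=
    (two_mul_dotProduct_lyapunovSolution_mulVec hkap.ne' hkad.ne').trans_le (le_max_right _ _)
  have hratio : 0 ≤ Finset.univ.sup' Finset.univ_nonempty hP2herm.eigenvalues
      / Finset.univ.inf' Finset.univ_nonempty hP2herm.eigenvalues :=
    div_nonneg (hpos.inf'_eigenvalues_pos.le.trans (Finset.inf'_le_sup' _ _ _))
      hpos.inf'_eigenvalues_pos.le
  calc √(e t ^ 2 + ed t ^ 2) = √(![e t, ed t] ⬝ᵥ ![e t, ed t]) := by simp [dotProduct, sq]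
    _ ≤ _ := hbound
    _ ≤ _ := by
      rw [mul_div_assoc]
      gcongr
      exact (abs_nonneg _).trans (hef_le 0 le_rfl)

/-- **Uniform state bound from a bounded forcing term.**
For `ė = e_d`, `ė_d = −k_ap e − k_ad e_d + e_f(t)` with zero initial data and
`S = sup_{t ≥ 0} |e_f(t)|` finite, one has for all `t ≥ 0`:
`‖(e(t), e_d(t))‖ ≤ γ₄·S` with `γ₄ = max{1/k_ap, (1 + k_ap)/(k_ad k_ap)}·λ_max(P₂)/λ_min(P₂)`,
where `λ_min(P₂)`, `λ_max(P₂)` are the smallest and largest eigenvalues of `P₂`. -/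
theorem uniform_state_bound
    (kap kad : ℝ) (hkap : 0 < kap) (hkad : 0 < kad)
    (P2 : Matrix (Fin 2) (Fin 2) ℝ)
    (hP2 : P2 = !![(1 + kap) / (2 * kad) + kad / (2 * kap), 1 / (2 * kap);
                   1 / (2 * kap), (1 + kap) / (2 * kad * kap)])
    (hP2herm : P2.IsHermitian)
    (e ed ef : ℝ → ℝ) (S : ℝ)
    (hef : ContinuousOn ef (Set.Ici 0))
    (hS : IsLUB {y : ℝ | ∃ t ≥ (0:ℝ), y = |ef t|} S)
    (he : ∀ t ≥ (0:ℝ), HasDerivAt e (ed t) t)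
    (hed : ∀ t ≥ (0:ℝ), HasDerivAt ed (-kap * e t - kad * ed t + ef t) t)
    (he0 : e 0 = 0) (hed0 : ed 0 = 0) :
    ∀ t ≥ (0:ℝ),
      Real.sqrt ((e t) ^ 2 + (ed t) ^ 2)
        ≤ (max (1 / kap) ((1 + kap) / (kad * kap))
            * (Finset.univ.sup' Finset.univ_nonempty hP2herm.eigenvalues)
            / (Finset.univ.inf' Finset.univ_nonempty hP2herm.eigenvalues)) * S :=
  uniform_state_bound_general kap kad hkap hkad P2 hP2 hP2herm e ed ef S hS he hed he0 hed0
end
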